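/- arXiv:2603.02291 — 2 statements merged into one kernel-verified Lean document; each statement's English description precedes it below -/
import Mathlib

section
/- Let Σ be a symmetric positive definite 2×2 matrix with smallest eigenvalue λ_min(Σ), let ϖ > 0 and D_safe ≥ 0, and let μ ∈ ℝ². Define the Mahalanobis norm ‖x‖_M = √(xᵀ Σ⁻¹ x) and the confidence ellipse E_ϖ = {e : eᵀ Σ⁻¹ e ≤ ϖ}. If ‖μ‖_M > √ϖ + D_safe/√(λ_min(Σ)), then for all e ∈ E_ϖ and all u with ‖u‖ ≤ D_safe, we have ‖μ + e + u‖_M > 0; equivalently, the origin is not contained in μ + E_ϖ ⊕ {u : ‖u‖ ≤ D_safe}. -/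
/-!
Write `‖x‖_M = √(xᵀ Σ⁻¹ x)`; it is the seminorm of the inner product given by `Σ⁻¹`, so the
triangle inequality applied to `μ = (μ + e + u) - e - u` gives
`‖μ + e + u‖_M ≥ ‖μ‖_M - ‖e‖_M - ‖u‖_M`. Here `‖e‖_M ≤ √ϖ`, and since `Σ⁻¹ ≤ λ_min(Σ)⁻¹ • 1` in the
Loewner order, `‖u‖_M ≤ ‖u‖ / √λ_min(Σ) ≤ D_safe / √λ_min(Σ)`.
-/

open Matrix

namespace Matrix

variable {n : Type*} [Fintype n]

lemma PosSemidef.sqrt_dotProduct_mulVec_add_le {M : Matrix n n ℝ} (hM : M.PosSemidef)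
    (x y : n → ℝ) :
    √((x + y) ⬝ᵥ M *ᵥ (x + y)) ≤ √(x ⬝ᵥ M *ᵥ x) + √(y ⬝ᵥ M *ᵥ y) := by
  let E := M.toSeminormedAddCommGroup hM
  have norm_eq (z : n → ℝ) : E.norm z = √(z ⬝ᵥ M *ᵥ z) := by
    rw [@norm_eq_sqrt_re_inner ℝ _ _ E (M.toInnerProductSpace hM)]
    change √((M *ᵥ z) ⬝ᵥ star z) = _
    rw [star_trivial, dotProduct_comm]
  simpa only [norm_eq] using @norm_add_le _ E.toSeminormedAddGroup x y

lemma neg_dotProduct_mulVec_neg (M : Matrix n n ℝ) (x : n → ℝ) :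
    -x ⬝ᵥ M *ᵥ -x = x ⬝ᵥ M *ᵥ x := by
  rw [mulVec_neg, neg_dotProduct_neg]

variable [DecidableEq n] [Nonempty n] {S : Matrix n n ℝ}

lemma PosDef.iInf_eigenvalues_pos (hS : S.PosDef) : 0 < ⨅ i, hS.1.eigenvalues i := by
  obtain ⟨i, hi⟩ := exists_eq_ciInf_of_finite (f := hS.1.eigenvalues)
  exact hi ▸ hS.eigenvalues_pos i

open scoped MatrixOrder in
lemma PosDef.inv_le_algebraMap_inv_iInf_eigenvalues (hS : S.PosDef) :
    S⁻¹ ≤ algebraMap ℝ _ (⨅ i, hS.1.eigenvalues i)⁻¹ := by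
  obtain ⟨u, hu⟩ := hS.isUnit
  rw [le_algebraMap_iff_spectrum_le hS.inv.1.isSelfAdjoint]
  intro x hx
  rw [← hu, ← coe_units_inv, ← spectrum.inv₀_mem_iff, hu,
    hS.1.spectrum_real_eq_range_eigenvalues] at hx
  obtain ⟨i, hi⟩ := hx
  rw [← inv_inv x, ← hi]
  exact inv_anti₀ hS.iInf_eigenvalues_pos (ciInf_le (Finite.bddBelow_range _) i)

open scoped MatrixOrder in
lemma PosDef.dotProduct_inv_mulVec_le (hS : S.PosDef) (x : n → ℝ) :
    x ⬝ᵥ S⁻¹ *ᵥ x ≤ (x ⬝ᵥ x) / ⨅ i, hS.1.eigenvalues i := by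
  have h := (le_iff.mp hS.inv_le_algebraMap_inv_iInf_eigenvalues).dotProduct_mulVec_nonneg x
  simp only [sub_mulVec, Algebra.algebraMap_eq_smul_one, smul_mulVec, one_mulVec, dotProduct_sub,
    dotProduct_smul, smul_eq_mul, star_trivial, sub_nonneg] at h
  rwa [div_eq_inv_mul]

lemma PosDef.sqrt_dotProduct_inv_mulVec_le (hS : S.PosDef) (x : n → ℝ) :
    √(x ⬝ᵥ S⁻¹ *ᵥ x) ≤ √(x ⬝ᵥ x) / √(⨅ i, hS.1.eigenvalues i) := by
  rw [← Real.sqrt_div' _ hS.iInf_eigenvalues_pos.le]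
  exact Real.sqrt_le_sqrt (hS.dotProduct_inv_mulVec_le x)

end Matrix

theorem stmt_3_general (S : Matrix (Fin 2) (Fin 2) ℝ) (hS : S.PosDef)
    (ϖ Dsafe : ℝ) (μ : Fin 2 → ℝ)
    (hμ : Real.sqrt (μ ⬝ᵥ S⁻¹ *ᵥ μ) >
      Real.sqrt ϖ + Dsafe / Real.sqrt (⨅ i, hS.1.eigenvalues i)) :
    ∀ e : Fin 2 → ℝ, e ⬝ᵥ S⁻¹ *ᵥ e ≤ ϖ →
      ∀ u : Fin 2 → ℝ, Real.sqrt (u ⬝ᵥ u) ≤ Dsafe →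
        0 < Real.sqrt ((μ + e + u) ⬝ᵥ S⁻¹ *ᵥ (μ + e + u)) := by
  intro e he u hu
  have he' : √(e ⬝ᵥ S⁻¹ *ᵥ e) ≤ √ϖ := Real.sqrt_le_sqrt he
  have hu' : √(u ⬝ᵥ S⁻¹ *ᵥ u) ≤ Dsafe / √(⨅ i, hS.1.eigenvalues i) :=
    (hS.sqrt_dotProduct_inv_mulVec_le u).trans (div_le_div_of_nonneg_right hu (Real.sqrt_nonneg _))
  have triangle := hS.inv.posSemidef.sqrt_dotProduct_mulVec_add_le
  have hμ_le : √(μ ⬝ᵥ S⁻¹ *ᵥ μ) ≤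
      √((μ + e + u) ⬝ᵥ S⁻¹ *ᵥ (μ + e + u)) + √(e ⬝ᵥ S⁻¹ *ᵥ e) + √(u ⬝ᵥ S⁻¹ *ᵥ u) := by
    calc √(μ ⬝ᵥ S⁻¹ *ᵥ μ)
        = √((μ + e + u + -e + -u) ⬝ᵥ S⁻¹ *ᵥ (μ + e + u + -e + -u)) := by
          rw [show μ + e + u + -e + -u = μ by abel]
      _ ≤ √((μ + e + u) ⬝ᵥ S⁻¹ *ᵥ (μ + e + u)) + √(-e ⬝ᵥ S⁻¹ *ᵥ -e) + √(-u ⬝ᵥ S⁻¹ *ᵥ -u) :=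
        (triangle _ _).trans (add_le_add_left (triangle _ _) _)
      _ = _ := by rw [neg_dotProduct_mulVec_neg, neg_dotProduct_mulVec_neg]
  linarith

/-- Lemma 2 of the paper: if `‖μ‖_M > √ϖ + D_safe/√(λ_min(Σ))`, then for every `e` in the
confidence ellipse `{e : eᵀ Σ⁻¹ e ≤ ϖ}` and every `u` with Euclidean norm `≤ D_safe`,
`‖μ + e + u‖_M > 0` (the origin is not in `μ + E_ϖ ⊕ D_safe`-ball). -/
theorem stmt_3 (S : Matrix (Fin 2) (Fin 2) ℝ) (hS : S.PosDef)
    (ϖ Dsafe : ℝ) (hϖ : 0 < ϖ) (hD : 0 ≤ Dsafe) (μ : Fin 2 → ℝ)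
    (hμ : Real.sqrt (μ ⬝ᵥ S⁻¹ *ᵥ μ) >
      Real.sqrt ϖ + Dsafe / Real.sqrt (⨅ i, hS.1.eigenvalues i)) :
    ∀ e : Fin 2 → ℝ, e ⬝ᵥ S⁻¹ *ᵥ e ≤ ϖ →
      ∀ u : Fin 2 → ℝ, Real.sqrt (u ⬝ᵥ u) ≤ Dsafe →
        0 < Real.sqrt ((μ + e + u) ⬝ᵥ S⁻¹ *ᵥ (μ + e + u)) :=
  stmt_3_general S hS ϖ Dsafe μ hμ
end

section
/- Let Σ be a symmetric positive definite 2×2 matrix and z ~ N(μ, Σ). Let ϖ satisfy P(χ²₂ ≤ ϖ) = 1 − ϱ, and suppose ‖μ‖_M > √ϖ + D_safe/√(λ_min(Σ)), where ‖μ‖_M = √(μᵀΣ⁻¹μ). Then P(‖z‖ ≤ D_safe) ≤ ϱ, i.e., the probability that the random relative position z lies within Euclidean distance D_safe of the origin is at most ϱ. -/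
open Matrix MeasureTheory ProbabilityTheory
open Real Set

noncomputable def posSemidefSqrt {n : Type*} [Fintype n] [DecidableEq n] {A : Matrix n n ℝ}
    (hA : A.PosSemidef) : Matrix n n ℝ :=
  hA.1.eigenvectorUnitary.1 * diagonal ((↑) ∘ (√·) ∘ hA.1.eigenvalues) *
    (star hA.1.eigenvectorUnitary : Matrix n n ℝ)


lemma aux_radial (a : ℝ) :
    ∫ r in Set.Ioi a, r * Real.exp (-r ^ 2 / 2) = Real.exp (-a ^ 2 / 2) := by
  have hderiv : ∀ x ∈ Set.Ici a, HasDerivAt (fun r => -Real.exp (-r ^ 2 / 2))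
      (x * Real.exp (-x ^ 2 / 2)) x := by
    intro x _
    have h1 : HasDerivAt (fun r : ℝ => -r ^ 2 / 2) (-x) x := by
      have := ((hasDerivAt_pow 2 x).neg).div_const 2
      simpa using this.congr_deriv (by push_cast; ring)
    have h2 := (h1.exp).neg
    exact h2.congr_deriv (by ring)
  have hint : IntegrableOn (fun r => r * Real.exp (-r ^ 2 / 2)) (Set.Ioi a) := by
    have : Integrable (fun r : ℝ => r * Real.exp (-(1/2 : ℝ) * r ^ 2)) :=
      integrable_mul_exp_neg_mul_sq (by norm_num)
    have h := this.integrableOn (s := Set.Ioi a)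
    refine h.congr_fun (fun x _ => by ring_nf) measurableSet_Ioi
  have htend : Filter.Tendsto (fun r => -Real.exp (-r ^ 2 / 2)) Filter.atTop (nhds 0) := by
    have h1 : Filter.Tendsto (fun r : ℝ => -r ^ 2 / 2) Filter.atTop Filter.atBot := by
      apply Filter.Tendsto.atBot_div_const (by norm_num : (0:ℝ) < 2)
      exact Filter.tendsto_neg_atTop_atBot.comp (Filter.tendsto_pow_atTop two_ne_zero)
    have := (Real.tendsto_exp_atBot.comp h1).neg
    simpa using this
  have := integral_Ioi_of_hasDerivAt_of_tendsto' hderiv hint htend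
  rw [this]; ring

lemma aux_tail (t : ℝ) (ht : 0 < t) :
    ((gaussianReal 0 1).prod (gaussianReal 0 1)) {p : ℝ × ℝ | t < p.1 ^ 2 + p.2 ^ 2}
      = ENNReal.ofReal (Real.exp (-t / 2)) := by
  have hγ : gaussianReal 0 1 = volume.withDensity (gaussianPDF 0 1) :=
    gaussianReal_of_var_ne_zero 0 one_ne_zero
  set d : ℝ × ℝ → ℝ := fun p => gaussianPDFReal 0 1 p.1 * gaussianPDFReal 0 1 p.2 with hd
  have hprod : (gaussianReal 0 1).prod (gaussianReal 0 1)
      = (volume.prod volume).withDensity (fun p => ENNReal.ofReal (d p)) := by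
    refine Measure.prod_eq fun s u hs hu => ?_
    have heq : (fun p : ℝ × ℝ => ENNReal.ofReal (d p))
        = fun p => gaussianPDF 0 1 p.1 * gaussianPDF 0 1 p.2 := by
      funext p
      rw [hd, gaussianPDF, gaussianPDF,
        ENNReal.ofReal_mul (gaussianPDFReal_nonneg 0 1 p.1)]
    rw [heq, withDensity_apply _ (hs.prod hu), ← Measure.prod_restrict,
      lintegral_prod_mul (measurable_gaussianPDF 0 1).aemeasurable
        (measurable_gaussianPDF 0 1).aemeasurable,
      hγ, withDensity_apply _ hs, withDensity_apply _ hu]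
  set A : Set (ℝ × ℝ) := {p | t < p.1 ^ 2 + p.2 ^ 2} with hA
  have hAm : MeasurableSet A := by
    apply measurableSet_lt measurable_const
    exact (measurable_fst.pow_const 2).add (measurable_snd.pow_const 2)
  have hint : Integrable d (volume.prod volume) :=
    (integrable_gaussianPDFReal 0 1).mul_prod (integrable_gaussianPDFReal 0 1)
  have h1 : ((gaussianReal 0 1).prod (gaussianReal 0 1)) A
      = ENNReal.ofReal (∫ p in A, d p ∂(volume.prod volume)) := by
    rw [hprod, withDensity_apply _ hAm,
      ← ofReal_integral_eq_lintegral_ofReal (hint.restrict (s := A))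
        (Filter.Eventually.of_forall fun p =>
          mul_nonneg (gaussianPDFReal_nonneg 0 1 p.1) (gaussianPDFReal_nonneg 0 1 p.2))]
  rw [h1]
  congr 1
  -- Compute the integral via polar coordinates
  have h2 : ∫ p in A, d p ∂(volume.prod volume) = ∫ p, A.indicator d p := by
    rw [← Measure.volume_eq_prod, integral_indicator hAm]
  rw [h2, ← integral_comp_polarCoord_symm (A.indicator d)]
  set h : ℝ → ℝ := (Set.Ioi (Real.sqrt t)).indicator
      (fun r => r * ((2 * π)⁻¹ * Real.exp (-r ^ 2 / 2))) with hh
  have hcongr : ∀ p ∈ polarCoord.target,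
      p.1 • (A.indicator d) (polarCoord.symm p) = h p.1 * (1 : ℝ) := by
    rintro ⟨r, θ⟩ ⟨hr, hθ⟩
    simp only [Set.mem_Ioi] at hr
    have hsymm : polarCoord.symm (r, θ) = (r * Real.cos θ, r * Real.sin θ) := rfl
    have hsq : (r * Real.cos θ) ^ 2 + (r * Real.sin θ) ^ 2 = r ^ 2 := by
      calc (r * Real.cos θ) ^ 2 + (r * Real.sin θ) ^ 2
          = r ^ 2 * (Real.cos θ ^ 2 + Real.sin θ ^ 2) := by ring
        _ = r ^ 2 := by rw [Real.cos_sq_add_sin_sq, mul_one]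
    have hs2 : Real.sqrt (2 * π) * Real.sqrt (2 * π) = 2 * π :=
      Real.mul_self_sqrt (by positivity)
    have hdd : d (polarCoord.symm (r, θ)) = (2 * π)⁻¹ * Real.exp (-r ^ 2 / 2) := by
      rw [hsymm, hd]
      simp only [gaussianPDFReal, NNReal.coe_one, mul_one, sub_zero]
      rw [mul_mul_mul_comm, ← mul_inv, hs2, ← Real.exp_add]
      have hexp : -(r * Real.cos θ) ^ 2 / 2 + -(r * Real.sin θ) ^ 2 / 2 = -r ^ 2 / 2 := by
        linarith [hsq]
      rw [hexp]
    have hmemA : (polarCoord.symm (r, θ) ∈ A) ↔ t < r ^ 2 := by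
      rw [hsymm]; simp only [hA, Set.mem_setOf_eq]; rw [hsq]
    have hmemI : (r ∈ Set.Ioi (Real.sqrt t)) ↔ t < r ^ 2 := by
      simp [Set.mem_Ioi, Real.sqrt_lt' hr]
    rw [hh, Set.indicator_apply, Set.indicator_apply]
    by_cases hc : t < r ^ 2
    · rw [if_pos (hmemA.mpr hc), if_pos (hmemI.mpr hc), hdd, smul_eq_mul, mul_one]
    · rw [if_neg (fun hx => hc (hmemA.mp hx)), if_neg (fun hx => hc (hmemI.mp hx)),
        smul_zero, zero_mul]
  rw [setIntegral_congr_fun (polarCoord.open_target.measurableSet) hcongr]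
  have htarget : polarCoord.target = Set.Ioi (0:ℝ) ×ˢ Set.Ioo (-π) π := rfl
  rw [htarget, Measure.volume_eq_prod, setIntegral_prod_mul h (fun _ => (1:ℝ))]
  have hright : ∫ _ in Set.Ioo (-π) π, (1:ℝ) = 2 * π := by
    rw [setIntegral_const, smul_eq_mul, mul_one, measureReal_def, Real.volume_Ioo,
      ENNReal.toReal_ofReal (by linarith [Real.pi_pos])]
    ring
  have hleft : ∫ r in Set.Ioi (0:ℝ), h r = (2 * π)⁻¹ * Real.exp (-t / 2) := by
    rw [hh, setIntegral_indicator measurableSet_Ioi, Set.Ioi_inter_Ioi,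
      max_eq_right (Real.sqrt_nonneg t)]
    rw [show (fun r : ℝ => r * ((2 * π)⁻¹ * Real.exp (-r ^ 2 / 2)))
      = fun r : ℝ => (2 * π)⁻¹ * (r * Real.exp (-r ^ 2 / 2)) from funext fun r => by ring]
    rw [integral_const_mul, aux_radial, Real.sq_sqrt ht.le]
  rw [hleft, hright]
  have hπ : (2 * π) ≠ 0 := by positivity
  field_simp

lemma aux_sqrt_dot (x : Fin 2 → ℝ) :
    Real.sqrt (x ⬝ᵥ x) = ‖(WithLp.equiv 2 (Fin 2 → ℝ)).symm x‖ := by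
  rw [EuclideanSpace.norm_eq]
  congr 1
  simp [dotProduct, sq, Real.norm_eq_abs, abs_mul_abs_self]

lemma aux_dot_nonneg (x : Fin 2 → ℝ) : 0 ≤ x ⬝ᵥ x :=
  Finset.sum_nonneg fun i _ => mul_self_nonneg (x i)

lemma aux_triangle (x y : Fin 2 → ℝ) :
    Real.sqrt ((x + y) ⬝ᵥ (x + y)) ≤ Real.sqrt (x ⬝ᵥ x) + Real.sqrt (y ⬝ᵥ y) := by
  rw [aux_sqrt_dot, aux_sqrt_dot, aux_sqrt_dot]
  exact norm_add_le _ _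

lemma aux_rayleigh {A : Matrix (Fin 2) (Fin 2) ℝ} (hA : A.IsHermitian) (x : Fin 2 → ℝ) :
    (⨅ i, hA.eigenvalues i) * (x ⬝ᵥ x) ≤ x ⬝ᵥ A *ᵥ x := by
  set c := ⨅ i, hA.eigenvalues i with hc
  have hci : ∀ i, c ≤ hA.eigenvalues i := fun i => ciInf_le (Set.Finite.bddBelow (Set.finite_range _)) i
  have hdiag : (Matrix.diagonal (fun i => hA.eigenvalues i - c)).PosSemidef :=
    Matrix.posSemidef_diagonal_iff.mpr fun i => sub_nonneg.mpr (hci i)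
  have hps : (A - c • 1).PosSemidef := by
    have h2 := hdiag.mul_mul_conjTranspose_same (hA.eigenvectorUnitary : Matrix (Fin 2) (Fin 2) ℝ)
    have key : (hA.eigenvectorUnitary : Matrix (Fin 2) (Fin 2) ℝ) *
        Matrix.diagonal (fun i => hA.eigenvalues i - c) *
        (hA.eigenvectorUnitary : Matrix (Fin 2) (Fin 2) ℝ)ᴴ = A - c • 1 := by
      have hD : Matrix.diagonal (fun i => hA.eigenvalues i - c)
          = Matrix.diagonal (RCLike.ofReal ∘ hA.eigenvalues) - c • 1 := by
        rw [← Matrix.diagonal_sub]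
        congr 1
        ext i j
        by_cases h : i = j <;> simp [Matrix.diagonal, Matrix.one_apply, h]
      rw [hD, Matrix.mul_sub, Matrix.sub_mul]
      congr 1
      · exact (hA.spectral_theorem).symm
      · rw [Matrix.mul_smul, Matrix.smul_mul]
        congr 1
        rw [Matrix.mul_one]
        exact (Matrix.mem_unitaryGroup_iff).mp hA.eigenvectorUnitary.2
    rwa [key] at h2
  have h3 := hps.dotProduct_mulVec_nonneg x
  rw [star_trivial, Matrix.sub_mulVec, dotProduct_sub, Matrix.smul_mulVec,
    Matrix.one_mulVec, dotProduct_smul, smul_eq_mul, sub_nonneg] at h3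
  exact h3

lemma aux_sqrt_herm {A : Matrix (Fin 2) (Fin 2) ℝ} (hA : A.PosSemidef) :
    (posSemidefSqrt hA)ᴴ = posSemidefSqrt hA := by
  simp only [posSemidefSqrt]
  rw [conjTranspose_mul, conjTranspose_mul, star_eq_conjTranspose, conjTranspose_conjTranspose,
    diagonal_conjTranspose, star_trivial, mul_assoc]

lemma aux_sqrt_mul_self {A : Matrix (Fin 2) (Fin 2) ℝ} (hA : A.PosSemidef) :
    posSemidefSqrt hA * posSemidefSqrt hA = A := by
  have hU : star (hA.1.eigenvectorUnitary : Matrix (Fin 2) (Fin 2) ℝ) *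
      hA.1.eigenvectorUnitary = 1 := Matrix.UnitaryGroup.star_mul_self _
  have hDD : diagonal ((↑) ∘ (√·) ∘ hA.1.eigenvalues) * diagonal ((↑) ∘ (√·) ∘ hA.1.eigenvalues)
      = diagonal (RCLike.ofReal ∘ hA.1.eigenvalues : Fin 2 → ℝ) := by
    rw [diagonal_mul_diagonal]
    congr 1
    funext i
    simp [Real.mul_self_sqrt (hA.eigenvalues_nonneg i)]
  conv_rhs => rw [hA.1.spectral_theorem]
  rw [Unitary.conjStarAlgAut_apply]
  simp only [posSemidefSqrt]
  rw [show ∀ X Y Z W V : Matrix (Fin 2) (Fin 2) ℝ, X * Y * Z * (W * Y * V) = X * Y * (Z * W) * Y * V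
    from fun _ _ _ _ _ => by simp only [mul_assoc]]
  rw [hU, mul_one, mul_assoc _ (Matrix.diagonal _) (Matrix.diagonal _), hDD]

lemma aux_det_core (S : Matrix (Fin 2) (Fin 2) ℝ) (hS : S.PosDef)
    (μ v : Fin 2 → ℝ) (ϖ Dsafe : ℝ) (hϖ0 : 0 ≤ ϖ) (hD : 0 ≤ Dsafe)
    (hμ : Real.sqrt (μ ⬝ᵥ S⁻¹ *ᵥ μ) >
      Real.sqrt ϖ + Dsafe / Real.sqrt (⨅ i, hS.1.eigenvalues i))
    (hle : Real.sqrt ((μ + posSemidefSqrt hS.posSemidef *ᵥ v) ⬝ᵥ (μ + posSemidefSqrt hS.posSemidef *ᵥ v)) ≤ Dsafe) :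
    ϖ < v ⬝ᵥ v := by
  set A := posSemidefSqrt hS.posSemidef with hA
  have hAH : Aᴴ = A := aux_sqrt_herm hS.posSemidef
  have hAA : A * A = S := aux_sqrt_mul_self hS.posSemidef
  -- λ min positive
  set lam := ⨅ i, hS.1.eigenvalues i with hlam
  have hlampos : 0 < lam := by
    obtain ⟨i, hi⟩ := Finite.exists_min hS.1.eigenvalues
    exact lt_of_lt_of_le (hS.eigenvalues_pos i) (le_ciInf hi)
  -- invertibility
  have hdet : IsUnit A.det := by
    have : A.det * A.det = S.det := by rw [← Matrix.det_mul, hAA]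
    have hS0 : S.det ≠ 0 := ne_of_gt hS.det_pos
    exact isUnit_iff_ne_zero.mpr (fun h => hS0 (by rw [← this, h, mul_zero]))
  set B := A⁻¹ with hB
  have hBA : B * A = 1 := Matrix.nonsing_inv_mul A hdet
  have hAB : A * B = 1 := Matrix.mul_nonsing_inv A hdet
  have hSinv : S⁻¹ = B * B := by rw [← hAA, Matrix.mul_inv_rev]
  have hBH : Bᴴ = B := by rw [hB, Matrix.conjTranspose_nonsing_inv, hAH]
  have hBT : Bᵀ = B := by rw [← Matrix.conjTranspose_eq_transpose_of_trivial, hBH]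
  have hAT : Aᵀ = A := by rw [← Matrix.conjTranspose_eq_transpose_of_trivial, hAH]
  -- Mahalanobis as Euclidean norm of B-transformed vector
  have hMa : ∀ x : Fin 2 → ℝ, x ⬝ᵥ S⁻¹ *ᵥ x = (B *ᵥ x) ⬝ᵥ (B *ᵥ x) := by
    intro x
    rw [hSinv, ← Matrix.mulVec_mulVec, Matrix.dotProduct_mulVec]
    conv_lhs => rw [← hBT]
    rw [Matrix.vecMul_transpose, hBT]
  set zz := μ + A *ᵥ v with hzz
  have hz2 : zz ⬝ᵥ zz ≤ Dsafe ^ 2 := by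
    have h0 : 0 ≤ zz ⬝ᵥ zz := aux_dot_nonneg zz
    calc zz ⬝ᵥ zz = Real.sqrt (zz ⬝ᵥ zz) ^ 2 := (Real.sq_sqrt h0).symm
    _ ≤ Dsafe ^ 2 := pow_le_pow_left₀ (Real.sqrt_nonneg _) hle 2
  -- bound on ‖B zz‖
  have hu : Real.sqrt ((B *ᵥ zz) ⬝ᵥ (B *ᵥ zz)) ≤ Dsafe / Real.sqrt lam := by
    have hray := aux_rayleigh hS.1 (B *ᵥ zz)
    have hAz : A *ᵥ (B *ᵥ zz) = zz := by rw [Matrix.mulVec_mulVec, hAB, Matrix.one_mulVec]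
    have hSq : (B *ᵥ zz) ⬝ᵥ S *ᵥ (B *ᵥ zz) = zz ⬝ᵥ zz := by
      rw [← hAA, ← Matrix.mulVec_mulVec, hAz, Matrix.dotProduct_mulVec]
      conv_lhs => rw [← hAT]
      rw [Matrix.vecMul_transpose, hAz]
    rw [hSq] at hray
    have hub : (B *ᵥ zz) ⬝ᵥ (B *ᵥ zz) ≤ Dsafe ^ 2 / lam := by
      rw [le_div_iff₀ hlampos, mul_comm]
      exact hray.trans hz2
    calc Real.sqrt ((B *ᵥ zz) ⬝ᵥ (B *ᵥ zz)) ≤ Real.sqrt (Dsafe ^ 2 / lam) :=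
      Real.sqrt_le_sqrt hub
    _ = Dsafe / Real.sqrt lam := by
      rw [Real.sqrt_div (sq_nonneg Dsafe), Real.sqrt_sq hD]
  have hBz : B *ᵥ zz = B *ᵥ μ + v := by
    rw [hzz, Matrix.mulVec_add, Matrix.mulVec_mulVec, hBA, Matrix.one_mulVec]
  have hBμ : B *ᵥ μ = B *ᵥ zz + (-v) := by rw [hBz]; abel
  have htri : Real.sqrt (μ ⬝ᵥ S⁻¹ *ᵥ μ) ≤ Dsafe / Real.sqrt lam + Real.sqrt (v ⬝ᵥ v) := by
    rw [hMa μ]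
    calc Real.sqrt ((B *ᵥ μ) ⬝ᵥ (B *ᵥ μ))
        = Real.sqrt ((B *ᵥ zz + (-v)) ⬝ᵥ (B *ᵥ zz + (-v))) := by rw [hBμ]
      _ ≤ Real.sqrt ((B *ᵥ zz) ⬝ᵥ (B *ᵥ zz)) + Real.sqrt ((-v) ⬝ᵥ (-v)) := aux_triangle _ _
      _ ≤ Dsafe / Real.sqrt lam + Real.sqrt (v ⬝ᵥ v) := by
          have hvv : (-v) ⬝ᵥ (-v) = v ⬝ᵥ v := by simp
          rw [hvv]
          exact add_le_add_left hu _
  have h5 : Real.sqrt ϖ < Real.sqrt (v ⬝ᵥ v) := by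
    have := lt_of_lt_of_le hμ htri
    linarith
  by_contra hcon
  push_neg at hcon
  exact absurd (Real.sqrt_le_sqrt hcon) (not_le.mpr h5)

/-- Probabilistic collision-avoidance guarantee: for `z = μ + e` with `e ~ N(0, Σ)`
(realized as `e = Σ^{1/2} w` for a standard 2D Gaussian `w`), if `ϖ` is the `(1−ϱ)`-quantile
of the chi-squared distribution with 2 degrees of freedom (`P(χ²₂ ≤ ϖ) = 1 − ϱ`, i.e.
`exp(−ϖ/2) = ϱ`) and `‖μ‖_M > √ϖ + D_safe/√(λ_min(Σ))`, then the probability that `z` lies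
within Euclidean distance `D_safe` of the origin is at most `ϱ`. -/
theorem stmt_14 {Ω : Type*} [MeasureSpace Ω]
    [IsProbabilityMeasure (volume : Measure Ω)]
    (S : Matrix (Fin 2) (Fin 2) ℝ) (hS : S.PosDef)
    (w : Fin 2 → Ω → ℝ)
    (hmeas : ∀ i, Measurable (w i))
    (hlaw : ∀ i, Measure.map (w i) volume = gaussianReal 0 1)
    (hindep : iIndepFun w volume)
    (μ : Fin 2 → ℝ) (z : Ω → Fin 2 → ℝ)
    (hz : ∀ ω, z ω = μ + posSemidefSqrt hS.posSemidef *ᵥ (fun i => w i ω))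
    (ϱ ϖ Dsafe : ℝ) (hϱ : ϱ ∈ Set.Ioo (0 : ℝ) 1) (hD : 0 ≤ Dsafe)
    (hϖ : Real.exp (-ϖ / 2) = ϱ)
    (hμ : Real.sqrt (μ ⬝ᵥ S⁻¹ *ᵥ μ) >
      Real.sqrt ϖ + Dsafe / Real.sqrt (⨅ i, hS.1.eigenvalues i)) :
    volume {ω | Real.sqrt (z ω ⬝ᵥ z ω) ≤ Dsafe} ≤ ENNReal.ofReal ϱ := by
  have hϖpos : 0 < ϖ := by
    by_contra hcon
    push_neg at hcon
    have : (1 : ℝ) ≤ Real.exp (-ϖ / 2) := Real.one_le_exp (by linarith)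
    linarith [hϱ.2]
  -- the event is contained in the chi-squared tail event
  have hsubset : {ω | Real.sqrt (z ω ⬝ᵥ z ω) ≤ Dsafe}
      ⊆ (fun ω => (w 0 ω, w 1 ω)) ⁻¹' {p : ℝ × ℝ | ϖ < p.1 ^ 2 + p.2 ^ 2} := by
    intro ω hω
    have hcore := aux_det_core S hS μ (fun i => w i ω) ϖ Dsafe hϖpos.le hD hμ
      (by rw [← hz ω]; exact hω)
    have hvv : (fun i => w i ω) ⬝ᵥ (fun i => w i ω) = (w 0 ω) ^ 2 + (w 1 ω) ^ 2 := by
      simp [dotProduct, Fin.sum_univ_two, pow_two]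
    simpa [Set.mem_preimage, Set.mem_setOf_eq, ← hvv] using hcore
  have hpairm : Measurable (fun ω => (w 0 ω, w 1 ω)) := (hmeas 0).prodMk (hmeas 1)
  have hB2m : MeasurableSet {p : ℝ × ℝ | ϖ < p.1 ^ 2 + p.2 ^ 2} := by
    apply measurableSet_lt measurable_const
    exact (measurable_fst.pow_const 2).add (measurable_snd.pow_const 2)
  have hmap : Measure.map (fun ω => (w 0 ω, w 1 ω)) volume
      = (gaussianReal 0 1).prod (gaussianReal 0 1) := by
    have hi : IndepFun (w 0) (w 1) volume := hindep.indepFun (by norm_num)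
    rw [← ((indepFun_iff_map_prod_eq_prod_map_map (hmeas 0).aemeasurable
      (hmeas 1).aemeasurable).mp hi).symm, hlaw 0, hlaw 1]
  calc volume {ω | Real.sqrt (z ω ⬝ᵥ z ω) ≤ Dsafe}
      ≤ volume ((fun ω => (w 0 ω, w 1 ω)) ⁻¹' {p : ℝ × ℝ | ϖ < p.1 ^ 2 + p.2 ^ 2}) :=
        measure_mono hsubset
    _ = ((gaussianReal 0 1).prod (gaussianReal 0 1)) {p : ℝ × ℝ | ϖ < p.1 ^ 2 + p.2 ^ 2} := by
        rw [← hmap, Measure.map_apply hpairm hB2m]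
    _ = ENNReal.ofReal (Real.exp (-ϖ / 2)) := aux_tail ϖ hϖpos
    _ = ENNReal.ofReal ϱ := by rw [hϖ]
end
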